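/- Let q be a prime power and let M be a simple GF(q)-representable matroid with no coloops that has two distinct loose elements e and f. Then r(M) ≤ 2q, or {e, f} is a cocircuit of M. -/

import Mathlib

namespace LoosePaper

open Set
open scoped Matroid

variable {α β : Type*}

/-- A circuit of a matroid: a minimal dependent set. -/
def Circuit (M : Matroid α) (C : Set α) : Prop :=
  M.Dep C ∧ ∀ D, M.Dep D → D ⊆ C → D = C

/-- The rank of a matroid: the (common) cardinality of its bases. -/
noncomputable def rank (M : Matroid α) : ℕ :=
  sInf {n | ∃ B, M.IsBase B ∧ B.ncard = n}

/-- An element is loose if every circuit containing it has size at least the rank. -/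
def Loose (M : Matroid α) (e : α) : Prop :=
  e ∈ M.E ∧ ∀ C, Circuit M C → e ∈ C → rank M ≤ C.ncard

/-- An element is free if every circuit containing it is spanning. -/
def FreeElt (M : Matroid α) (e : α) : Prop :=
  e ∈ M.E ∧ ∀ C, Circuit M C → e ∈ C → M.closure C = M.E

/-- A coloop: an element contained in every base. -/
def Coloop (M : Matroid α) (e : α) : Prop :=
  e ∈ M.E ∧ ∀ B, M.IsBase B → e ∈ B

def NoColoops (M : Matroid α) : Prop := ∀ e, ¬ Coloop M e

/-- A matroid is simple if every pair of its elements is independent. -/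
def Simple (M : Matroid α) : Prop :=
  ∀ e ∈ M.E, ∀ f ∈ M.E, M.Indep {e, f}

/-- A matroid is paving if every circuit has size at least the rank. -/
def Paving (M : Matroid α) : Prop :=
  ∀ C, Circuit M C → rank M ≤ C.ncard

/-- `M` is representable over the field `F`. -/
def Representable (M : Matroid α) (F : Type*) [Field F] : Prop :=
  ∃ (ι : Type) (v : α → ι → F),
    ∀ I, I ⊆ M.E → (M.Indep I ↔ LinearIndependent F (fun x : I => v x.1))

/-- `N` is the vector matroid, on ground set all of `η`, of the matrix whose
column labelled by `c : η` is `A c`. -/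
def IsVectorMatroidOn (F : Type*) [Field F] {η ι : Type*} (A : η → ι → F)
    (N : Matroid η) : Prop :=
  N.E = Set.univ ∧ ∀ I : Set η, (N.Indep I ↔ LinearIndependent F (fun x : I => A x.1))

/-- `φ` is an isomorphism from `M` to `N`. -/
def IsIsoTo (M : Matroid α) (N : Matroid β) (φ : α → β) : Prop :=
  Set.BijOn φ M.E N.E ∧ ∀ I, I ⊆ M.E → (M.Indep I ↔ N.Indep (φ '' I))

/-- The matrix `[I_r | D]` of the matroid `M_r`; the column `Sum.inl i` is the
`i`-th standard basis vector, the column `Sum.inr 0` (the distinguished element `z`)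
is the all-ones vector, and for `1 ≤ j ≤ r-1` the column `Sum.inr j` has ones
exactly in rows `0` and `j` (`0`-indexed). -/
def MrMatrix (r : ℕ) : (Fin r ⊕ Fin r) → Fin r → ZMod 2
  | Sum.inl i => fun k => if k = i then 1 else 0
  | Sum.inr j => fun k =>
      if j.val = 0 then 1 else if k.val = 0 ∨ k = j then 1 else 0

/-- The matrix `[I_r | D]` of the matroid `N_r`; the column `Sum.inr 0`
(the distinguished element `z`) is `(0,1,…,1)ᵀ`, and for `1 ≤ j ≤ r-2` the column
`Sum.inr j` has ones exactly in rows `0`, `1` and `j+1` (`0`-indexed). -/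
def NrMatrix (r : ℕ) : (Fin r ⊕ Fin (r - 1)) → Fin r → ZMod 2
  | Sum.inl i => fun k => if k = i then 1 else 0
  | Sum.inr j => fun k =>
      if j.val = 0 then (if k.val = 0 then 0 else 1)
      else if k.val = 0 ∨ k.val = 1 ∨ k.val = j.val + 1 then 1 else 0

/-- The matrix `[I_r | D]` of the matroid `L_r`; the columns of `D` are the all-ones
vector, `(1,1,0,…,0)ᵀ`, `(1,0,1,0,…,0)ᵀ` and `(0,1,1,0,…,0)ᵀ`. -/
def LrMatrix (r : ℕ) : (Fin r ⊕ Fin 4) → Fin r → ZMod 2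
  | Sum.inl i => fun k => if k = i then 1 else 0
  | Sum.inr j => fun k =>
      if j = 0 then 1
      else if j = 1 then (if k.val = 0 ∨ k.val = 1 then 1 else 0)
      else if j = 2 then (if k.val = 0 ∨ k.val = 2 then 1 else 0)
      else if k.val = 1 ∨ k.val = 2 then 1 else 0

/-- The matrix `[I_r | D]` of the matroid `J_r`; the columns of `D` are
`(0,1,1,…,1)ᵀ`, `(1,1,1,0,…,0)ᵀ`, `(1,1,0,1,0,…,0)ᵀ` and `(1,0,1,1,0,…,0)ᵀ`. -/
def JrMatrix (r : ℕ) : (Fin r ⊕ Fin 4) → Fin r → ZMod 2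
  | Sum.inl i => fun k => if k = i then 1 else 0
  | Sum.inr j => fun k =>
      if j = 0 then (if k.val = 0 then 0 else 1)
      else if j = 1 then (if k.val = 0 ∨ k.val = 1 ∨ k.val = 2 then 1 else 0)
      else if j = 2 then (if k.val = 0 ∨ k.val = 1 ∨ k.val = 3 then 1 else 0)
      else if k.val = 0 ∨ k.val = 2 ∨ k.val = 3 then 1 else 0

/-- A matrix over `GF(3)` whose vector matroid is `U_{2,4}`. -/
def U24Matrix : Fin 4 → Fin 2 → ZMod 3
  | 0 => fun k => if k = 0 then 1 else 0
  | 1 => fun k => if k = 1 then 1 else 0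
  | 2 => fun _ => 1
  | 3 => fun k => if k = 0 then 1 else 2

/-- A `GF(3)`-matrix representing the matroid obtained from a circuit
`{e, c_0, …, c_{n-1}}` (where `e` is the element `Sum.inl ()`) by 2-summing a copy
of `U_{2,4}` across each element `c_d` with `d ∈ D`.  For `d ∉ D` the element
`Sum.inr (d, 0)` is `c_d`, and for `d ∈ D` the elements `Sum.inr (d, j)`,
`j = 0, 1, 2`, are the three elements of the copy of `U_{2,4}` other than its
basepoint. -/
def thetaMatrix (n : ℕ) (D : Finset (Fin n)) :
    (Unit ⊕ Fin n × Fin 3) → (Fin n ⊕ Fin n) → ZMod 3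
  | Sum.inl _ => fun row => Sum.elim (fun _ => 1) (fun _ => 0) row
  | Sum.inr (d, j) => fun row =>
      let ed : (Fin n ⊕ Fin n) → ZMod 3 :=
        Sum.elim (fun i => if i = d then 1 else 0) (fun _ => 0)
      let wd : (Fin n ⊕ Fin n) → ZMod 3 :=
        Sum.elim (fun _ => 0) (fun i => if i = d then 1 else 0)
      if d ∈ D then
        (if j = 0 then wd row else if j = 1 then ed row + wd row else ed row - wd row)
      else ed row

/-- The ground set of the 2-sum construction: the circuit element `e`, the
untouched circuit elements `c_d` for `d ∉ D`, and three `U_{2,4}`-elements for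
each `d ∈ D`. -/
def thetaGround (n : ℕ) (D : Finset (Fin n)) : Set (Unit ⊕ Fin n × Fin 3) :=
  {x | ∀ d : Fin n, ∀ j : Fin 3, x = Sum.inr (d, j) → (j = 0 ∨ d ∈ D)}

/-! If `r(M) > 2q`, every basis `B` meets `{e, f}`: since neither element is a coloop, `{e, f}` is
then a minimal set meeting every basis, that is, a cocircuit. Suppose a basis `B` avoids both,
and write `e = ∑ a_b b` and `f = ∑ c_b b` over `B`. A loose element lying in the span of a set of
size `k` lies on a circuit of size at most `k + 1`, so `r ≤ k + 1`. Hence at most one `a_b` and at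
most one `c_b` vanish, and for every `μ` at most two `b ∈ B` satisfy `a_b = μ c_b` (otherwise `e`
lies in the span of `f` and `r - 3` elements of `B`). The remaining ratios `a_b / c_b` lie in
`GF(q)ˣ`, so `r = |B| ≤ 2 + 2(q - 1) = 2q`. -/

section Counting

open Finset

variable {β F : Type*} [Field F] [Fintype F] [DecidableEq F] [DecidableEq β]

lemma card_le_two_mul_card_of_ratios (s : Finset β) (a c : β → F)
    (ha : #{b ∈ s | a b = 0} ≤ 1) (hc : #{b ∈ s | c b = 0} ≤ 1)
    (hac : ∀ μ, #{b ∈ s | a b = μ * c b} ≤ 2) :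
    #s ≤ 2 * Fintype.card F := by
  have hzero : #{b ∈ s | a b = 0 ∨ c b = 0} ≤ 2 := by
    rw [filter_or]
    exact (Finset.card_union_le _ _).trans (by omega)
  have hunits : #{b ∈ s | ¬(a b = 0 ∨ c b = 0)} ≤ 2 * #(univ.erase (0 : F)) := by
    refine card_le_mul_card_image_of_maps_to (f := fun b => a b / c b) ?_ 2 fun μ _ => ?_
    · intro b hb
      simp only [not_or, mem_filter] at hb
      exact mem_erase.mpr ⟨div_ne_zero hb.2.1 hb.2.2, mem_univ _⟩
    · refine le_trans (card_le_card fun b hb => ?_) (hac μ)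
      simp only [not_or, mem_filter] at hb ⊢
      exact ⟨hb.1.1, (div_eq_iff hb.1.2.2).mp hb.2⟩
  have hq : 1 ≤ Fintype.card F := Fintype.card_pos
  rw [card_erase_of_mem (mem_univ _), card_univ] at hunits
  have hsplit := card_filter_add_card_filter_not (s := s) fun b => a b = 0 ∨ c b = 0
  omega

end Counting

section Matroid

variable {M : Matroid α} {B C X Y : Set α} {e f g : α}

lemma circuit_iff_isCircuit : Circuit M C ↔ M.IsCircuit C := by
  simp only [Circuit, Matroid.isCircuit_def, minimal_subset_iff, eq_comm (a := C)]

lemma rank_eq_ncard (hB : M.IsBase B) : rank M = B.ncard :=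
  le_antisymm (Nat.sInf_le ⟨B, hB, rfl⟩)
    (le_csInf ⟨_, B, hB, rfl⟩ fun _ ⟨_, hB', hn⟩ => hn ▸ (hB'.ncard_eq_ncard_of_isBase hB).ge)

lemma Loose.rank_le_ncard_add_one (hg : Loose M g) (hgX : g ∉ X) (hX : X.Finite)
    (hcl : g ∈ M.closure X) : rank M ≤ X.ncard + 1 := by
  obtain ⟨C, hCX, hC, hgC⟩ := M.exists_isCircuit_of_mem_closure hcl hgX
  calc rank M ≤ C.ncard := hg.2 C (circuit_iff_isCircuit.mpr hC) hgC
    _ ≤ (insert g X).ncard := ncard_le_ncard hCX (hX.insert g)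
    _ ≤ X.ncard + 1 := ncard_insert_le g X

lemma mem_of_subset_pair_of_forall_isBase (hY : Y ⊆ {e, f}) (hf : f ∈ M.E)
    (hf' : ¬ Coloop M f) (hYB : ∀ B, M.IsBase B → (Y ∩ B).Nonempty) : e ∈ Y := by
  by_contra heY
  obtain ⟨B, hB, hfB⟩ : ∃ B, M.IsBase B ∧ f ∉ B := by
    by_contra! h
    exact hf' ⟨hf, h⟩
  obtain ⟨x, hxY, hxB⟩ := hYB B hB
  obtain rfl | rfl := hY hxY
  exacts [heY hxY, hfB hxB]

lemma isCocircuit_pair (hM : NoColoops M) (he : e ∈ M.E) (hf : f ∈ M.E)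
    (h : ∀ B, M.IsBase B → ({e, f} ∩ B).Nonempty) : M.IsCocircuit {e, f} := by
  rw [Matroid.isCocircuit_iff_minimal, minimal_subset_iff]
  refine ⟨h, fun Y hYB hY => Subset.antisymm (pair_subset ?_ ?_) hY⟩
  · exact mem_of_subset_pair_of_forall_isBase hY hf (hM f) hYB
  · exact mem_of_subset_pair_of_forall_isBase (hY.trans (pair_comm e f).subset) he (hM e) hYB

end Matroid

section Representation

open Submodule
open scoped Finset

variable {ι F : Type*} [Field F] {M : Matroid α} {v : α → ι → F} {I X : Set α} {e f g : α}

def IsRepresentation (M : Matroid α) (v : α → ι → F) : Prop :=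
  ∀ I ⊆ M.E, M.Indep I ↔ LinearIndepOn F v I

lemma IsRepresentation.dep_insert_iff (hv : IsRepresentation M v) (hI : M.Indep I)
    (hg : g ∈ M.E) (hgI : g ∉ I) : M.Dep (insert g I) ↔ v g ∈ span F (v '' I) := by
  have hgIE : insert g I ⊆ M.E := insert_subset hg hI.subset_ground
  rw [← Matroid.not_indep_iff hgIE, hv _ hgIE, linearIndepOn_insert hgI,
    and_iff_right ((hv I hI.subset_ground).mp hI), not_not]

lemma IsRepresentation.mem_closure_of_mem_span (hv : IsRepresentation M v) (hX : X ⊆ M.E)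
    (hg : g ∈ M.E) (h : v g ∈ span F (v '' X)) : g ∈ M.closure X := by
  obtain ⟨I, hI⟩ := M.exists_isBasis X
  have hXI : span F (v '' X) ≤ span F (v '' I) := by
    refine span_le.mpr ?_
    rintro _ ⟨x, hxX, rfl⟩
    by_cases hxI : x ∈ I
    · exact subset_span (mem_image_of_mem v hxI)
    · exact (hv.dep_insert_iff hI.indep (hX hxX) hxI).mp (hI.insert_dep ⟨hxX, hxI⟩)
  rw [← hI.closure_eq_closure, hI.indep.mem_closure_iff]
  by_cases hgI : g ∈ I
  · exact .inr hgI
  · exact .inl ((hv.dep_insert_iff hI.indep hg hgI).mpr (hXI h))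

lemma Loose.rank_le_of_mem_span (hv : IsRepresentation M v) (hg : Loose M g) (hX : X ⊆ M.E)
    (hXfin : X.Finite) (hgX : g ∉ X) (h : v g ∈ span F (v '' X)) : rank M ≤ X.ncard + 1 :=
  hg.rank_le_ncard_add_one hgX hXfin (hv.mem_closure_of_mem_span hX hg.1 h)

lemma sum_smul_mem_span_image_filter_ne_zero [DecidableEq F] (s : Finset α) (x : α → F) :
    ∑ b ∈ s, x b • v b ∈ span F (v '' ↑({b ∈ s | x b ≠ 0} : Finset α)) := by
  rw [← Finset.sum_filter_of_ne fun b _ hb => left_ne_zero_of_smul hb]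
  exact sum_mem fun b hb => smul_mem _ _ (subset_span (mem_image_of_mem v hb))

variable [DecidableEq F] {s : Finset α} {x : α → F}

lemma Loose.card_filter_eq_zero_le_one (hv : IsRepresentation M v) (hg : Loose M g)
    (hs : (s : Set α) ⊆ M.E) (hgs : g ∉ s) (hrs : rank M = #s)
    (hx : ∑ b ∈ s, x b • v b = v g) : #{b ∈ s | x b = 0} ≤ 1 := by
  have hspan := sum_smul_mem_span_image_filter_ne_zero (v := v) s x
  rw [hx] at hspan
  have hT : (({b ∈ s | x b ≠ 0} : Finset α) : Set α) ⊆ M.E :=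
    (Finset.coe_subset.mpr (Finset.filter_subset _ s)).trans hs
  have hr := hg.rank_le_of_mem_span hv hT (Finset.finite_toSet _)
    (fun h => hgs (Finset.mem_filter.mp h).1) hspan
  have hcard : #{b ∈ s | x b = 0} + #{b ∈ s | x b ≠ 0} = #s :=
    Finset.card_filter_add_card_filter_not _
  rw [ncard_coe_finset] at hr
  omega

lemma Loose.card_filter_eq_mul_le_two (hv : IsRepresentation M v) (he : Loose M e)
    (hf : f ∈ M.E) (hef : e ≠ f) (hs : (s : Set α) ⊆ M.E) (hes : e ∉ s) (hrs : rank M = #s)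
    {a c : α → F} (ha : ∑ b ∈ s, a b • v b = v e) (hc : ∑ b ∈ s, c b • v b = v f) (μ : F) :
    #{b ∈ s | a b = μ * c b} ≤ 2 := by
  set T : Finset α := {b ∈ s | a b - μ * c b ≠ 0}
  have hdiff : v e - μ • v f ∈ span F (v '' T) := by
    have := sum_smul_mem_span_image_filter_ne_zero (v := v) s fun b => a b - μ * c b
    simpa only [sub_smul, mul_smul, Finset.sum_sub_distrib, ← Finset.smul_sum, ha, hc] using this
  have hspan : v e ∈ span F (v '' insert f ↑T) := by
    have hf' : μ • v f ∈ span F (v '' insert f ↑T) :=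
      smul_mem _ μ (subset_span (mem_image_of_mem v (mem_insert f _)))
    simpa using add_mem (span_mono (image_mono (subset_insert f _)) hdiff) hf'
  have hT : (T : Set α) ⊆ M.E := (Finset.coe_subset.mpr (Finset.filter_subset _ s)).trans hs
  have hr := he.rank_le_of_mem_span hv (insert_subset hf hT) ((Finset.finite_toSet T).insert f)
    (by rintro (h | h); exacts [hef h, hes (Finset.mem_filter.mp h).1]) hspan
  have hcard : #{b ∈ s | a b = μ * c b} + #T = #s := by
    simp only [T, ne_eq, sub_eq_zero]
    exact Finset.card_filter_add_card_filter_not _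
  have hinsert := ncard_insert_le f (T : Set α)
  rw [ncard_coe_finset] at hinsert
  omega

end Representation

lemma IsRepresentation.pair_inter_isBase_nonempty {ι F : Type*} [Field F] [Fintype F]
    {M : Matroid α} {v : α → ι → F} (hv : IsRepresentation M v) {e f : α} (hef : e ≠ f)
    (he : Loose M e) (hf : Loose M f) (hr : 2 * Fintype.card F < rank M) {B : Set α}
    (hB : M.IsBase B) : ({e, f} ∩ B).Nonempty := by
  classical
  by_contra hdisj
  have heB : e ∉ B := fun h => hdisj ⟨e, mem_insert e _, h⟩
  have hfB : f ∉ B := fun h => hdisj ⟨f, mem_insert_of_mem e rfl, h⟩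
  obtain ⟨s, rfl⟩ : ∃ s : Finset α, ↑s = B :=
    (finite_of_ncard_pos (rank_eq_ncard hB ▸ by omega)).exists_finset_coe
  have hrs : rank M = s.card := by rw [rank_eq_ncard hB, ncard_coe_finset]
  have hsE := hB.subset_ground
  have hspan {g : α} (hg : g ∈ M.E) (hgs : g ∉ (s : Set α)) :
      ∃ x : α → F, ∑ b ∈ s, x b • v b = v g :=
    (Submodule.mem_span_image_finset_iff_exists_fun' F).mp
      ((hv.dep_insert_iff hB.indep hg hgs).mp (hB.insert_dep ⟨hg, hgs⟩))
  obtain ⟨a, ha⟩ := hspan he.1 heB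
  obtain ⟨c, hc⟩ := hspan hf.1 hfB
  have hcard := card_le_two_mul_card_of_ratios s a c
    (he.card_filter_eq_zero_le_one hv hsE heB hrs ha)
    (hf.card_filter_eq_zero_le_one hv hsE hfB hrs hc)
    (he.card_filter_eq_mul_le_two hv hf.1 hef hsE heB hrs ha hc)
  omega

theorem two_loose_elements_general {α : Type*} (q : ℕ) (F : Type) [Field F] [Fintype F]
    (hq : Fintype.card F = q) (M : Matroid α)
    (hrep : Representable M F) (hcoloops : NoColoops M)
    (e f : α) (hef : e ≠ f) (he : Loose M e) (hf : Loose M f) :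
    rank M ≤ 2 * q ∨ Circuit M.dual {e, f} := by
  refine or_iff_not_imp_left.mpr fun hr => ?_
  obtain ⟨ι, v, hv⟩ := hrep
  rw [circuit_iff_isCircuit, ← Matroid.isCocircuit_def]
  exact isCocircuit_pair hcoloops he.1 hf.1 fun B hB =>
    IsRepresentation.pair_inter_isBase_nonempty hv hef he hf (hq ▸ not_le.mp hr) hB

/-- Theorem 1.4: if a simple `GF(q)`-representable matroid with no
coloops has two distinct loose elements `e` and `f`, then `r(M) ≤ 2q` or `{e, f}`
is a cocircuit of `M`. -/
theorem two_loose_elements {α : Type*} (q : ℕ) (F : Type) [Field F] [Fintype F]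
    (hq : Fintype.card F = q) (M : Matroid α) (hsimple : Simple M)
    (hrep : Representable M F) (hcoloops : NoColoops M)
    (e f : α) (hef : e ≠ f) (he : Loose M e) (hf : Loose M f) :
    rank M ≤ 2 * q ∨ Circuit M.dual {e, f} :=
  two_loose_elements_general q F hq M hrep hcoloops e f hef he hf

end LoosePaper
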